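/- arXiv:1907.04754 — 2 statements merged into one kernel-verified Lean document; each statement's English description precedes it below -/
import Mathlib

section
/- Let q ≥ 1 be a real number, let 0 < t < 1, and let f : ℂ → ℂ be complex-differentiable on the open unit disk {z ∈ ℂ : |z| < 1}. Then (π/(2q−1)) · (1 − (1−t²)^(2q−1)) · |f(0)|^q ≤ ∫_{|z|<t} |f(z)|^q · (1−|z|²)^(2q−2) dA(z), where dA denotes Lebesgue measure on ℂ and all powers are real powers. -/
/-!
For `q ≥ 1` the function `‖f‖ ^ q` is subharmonic: by the mean value property and Jensen's
inequality, `‖f 0‖ ^ q` is at most its average over every circle `‖z‖ = r`. Integrating this in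
polar coordinates against the radial weight `r (1 - r²) ^ (2q - 2) dr` on `0 < r < t`, whose
integral is `(1 - (1 - t²) ^ (2q - 1)) / (2 (2q - 1))`, gives the bound.
-/

open MeasureTheory Real Set Metric

variable {E : Type*} [NormedAddCommGroup E] [NormedSpace ℝ E]

theorem Complex.polarCoord_symm_eq_circleMap :
    ⇑Complex.polarCoord.symm = fun p : ℝ × ℝ => circleMap 0 p.1 p.2 := by
  ext p; simp [Complex.polarCoord_symm_apply, circleMap, Complex.exp_mul_I]

theorem integral_ball_eq_setIntegral_polar (g : ℂ → E) (t : ℝ) :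
    ∫ z in ball (0 : ℂ) t, g z =
      ∫ p in Ioo 0 t ×ˢ Ioo (-π) π, p.1 • g (circleMap 0 p.1 p.2) := by
  set preBall := (fun p : ℝ × ℝ => circleMap 0 p.1 p.2) ⁻¹' ball (0 : ℂ) t
  have hpre : MeasurableSet preBall :=
    measurableSet_ball.preimage circleMap.continuous.measurable
  have htarget : polarCoord.target ∩ preBall = Ioo 0 t ×ˢ Ioo (-π) π := by
    ext ⟨r, θ⟩
    simp only [preBall, polarCoord_target, mem_inter_iff, mem_preimage, mem_ball_zero_iff,
      norm_circleMap_zero, mem_prod, mem_Ioi, mem_Ioo]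
    constructor
    · rintro ⟨⟨hr, hθ⟩, hrt⟩
      exact ⟨⟨hr, by rwa [abs_of_pos hr] at hrt⟩, hθ⟩
    · rintro ⟨⟨hr, hrt⟩, hθ⟩
      exact ⟨⟨hr, hθ⟩, by rwa [abs_of_pos hr]⟩
  rw [← integral_indicator measurableSet_ball, ← Complex.integral_comp_polarCoord_symm,
    Complex.polarCoord_symm_eq_circleMap]
  simp_rw [← indicator_comp_right (fun p : ℝ × ℝ => circleMap 0 p.1 p.2),
    ← indicator_smul_apply _ Prod.fst]
  rw [setIntegral_indicator hpre, htarget]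
  rfl

theorem setIntegral_Ioo_neg_pi_pi_eq_circleAverage (g : ℂ → E) (c : ℂ) (r : ℝ) :
    ∫ θ in Ioo (-π) π, g (circleMap c r θ) = (2 * π) • circleAverage g c r := by
  have hperiodic : Function.Periodic (fun θ => g (circleMap c r θ)) (2 * π) :=
    fun θ => by simp only [periodic_circleMap c r θ]
  have h := hperiodic.intervalIntegral_add_eq (-π) 0
  rw [show -π + 2 * π = π by ring, zero_add] at h
  rw [circleAverage_def, smul_inv_smul₀ two_pi_pos.ne', ← h,
    intervalIntegral.integral_of_le (by linarith [pi_pos]), integral_Ioc_eq_integral_Ioo]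

theorem integral_ball_eq_integral_circleAverage {g : ℂ → E} {t : ℝ}
    (hg : ContinuousOn g (closedBall 0 t)) :
    ∫ z in ball (0 : ℂ) t, g z = (2 * π) • ∫ r in Ioo 0 t, r • circleAverage g 0 r := by
  have hcont : ContinuousOn (fun p : ℝ × ℝ => p.1 • g (circleMap 0 p.1 p.2))
      (Icc 0 t ×ˢ Icc (-π) π) := by
    refine continuousOn_fst.smul (hg.comp circleMap.continuous.continuousOn ?_)
    rintro ⟨r, θ⟩ ⟨hr, -⟩
    simpa [abs_of_nonneg hr.1] using hr.2
  have hint : IntegrableOn (fun p : ℝ × ℝ => p.1 • g (circleMap 0 p.1 p.2))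
      (Ioo 0 t ×ˢ Ioo (-π) π) :=
    (hcont.integrableOn_compact (isCompact_Icc.prod isCompact_Icc)).mono_set
      (prod_mono Ioo_subset_Icc_self Ioo_subset_Icc_self)
  rw [integral_ball_eq_setIntegral_polar, Measure.volume_eq_prod, setIntegral_prod _ hint,
    ← integral_smul]
  refine setIntegral_congr_fun measurableSet_Ioo fun r _ => ?_
  rw [integral_smul, setIntegral_Ioo_neg_pi_pi_eq_circleAverage, smul_comm]

theorem ConvexOn.map_circleAverage_le [CompleteSpace E] {φ : E → ℝ} {s : Set E} {f : ℂ → E}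
    {c : ℂ} {R : ℝ} (hφ : ConvexOn ℝ s φ) (hφc : ContinuousOn φ s) (hs : IsClosed s)
    (hfs : ∀ z ∈ sphere c |R|, f z ∈ s) (hf : CircleIntegrable f c R)
    (hφf : CircleIntegrable (φ ∘ f) c R) :
    φ (circleAverage f c R) ≤ circleAverage (φ ∘ f) c R := by
  simp only [circleAverage_eq_intervalAverage]
  refine hφ.map_set_average_le hφc hs ?_ ?_ ?_ (intervalIntegrable_iff.1 hf)
    (intervalIntegrable_iff.1 hφf)
  · simp
  · simp [ENNReal.mul_eq_top]
  · exact Filter.Eventually.of_forall fun θ => hfs _ (circleMap_mem_sphere' c R θ)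

theorem norm_le_circleAverage_norm {f : ℂ → E} {c : ℂ} {R : ℝ} :
    ‖circleAverage f c R‖ ≤ circleAverage (fun z => ‖f z‖) c R := by
  rw [circleAverage_def, circleAverage_def, norm_smul, smul_eq_mul,
    Real.norm_of_nonneg (by positivity)]
  gcongr
  exact intervalIntegral.norm_integral_le_integral_norm two_pi_pos.le

theorem DiffContOnCl.norm_rpow_le_circleAverage {F : Type*} [NormedAddCommGroup F]
    [NormedSpace ℂ F] [CompleteSpace F] {f : ℂ → F} {c : ℂ} {R q : ℝ}
    (hf : DiffContOnCl ℂ f (ball c |R|)) (hq : 1 ≤ q) :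
    ‖f c‖ ^ q ≤ Real.circleAverage (fun z => ‖f z‖ ^ q) c R := by
  rcases eq_or_ne R 0 with rfl | hR
  · simp
  have hsphere : sphere c |R| ⊆ closure (ball c |R|) := by
    rw [closure_ball c (abs_ne_zero.2 hR)]
    exact sphere_subset_closedBall
  have hcont : ContinuousOn (fun z => ‖f z‖) (sphere c |R|) := (hf.continuousOn.mono hsphere).norm
  have hmean : ‖f c‖ ≤ Real.circleAverage (fun z => ‖f z‖) c R :=
    hf.circleAverage ▸ norm_le_circleAverage_norm
  calc ‖f c‖ ^ q ≤ Real.circleAverage (fun z => ‖f z‖) c R ^ q :=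
        rpow_le_rpow (norm_nonneg _) hmean (by linarith)
    _ ≤ Real.circleAverage (fun z => ‖f z‖ ^ q) c R :=
        (convexOn_rpow hq).map_circleAverage_le
          (continuousOn_id.rpow_const fun _ _ => Or.inr (by linarith)) isClosed_Ici
          (fun z _ => norm_nonneg (f z)) hcont.circleIntegrable'
          (hcont.rpow_const fun _ _ => Or.inr (by linarith)).circleIntegrable'

theorem mul_integral_le_integral_ball_mul_radial {g : ℂ → ℝ} {w : ℝ → ℝ} {t a : ℝ}
    (hg : ContinuousOn g (closedBall 0 t)) (hw : ContinuousOn w (Icc 0 t))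
    (hw0 : ∀ r ∈ Ioo 0 t, 0 ≤ w r) (hga : ∀ r ∈ Ioo 0 t, a ≤ circleAverage g 0 r) :
    2 * π * a * ∫ r in Ioo 0 t, r * w r ≤ ∫ z in ball (0 : ℂ) t, g z * w ‖z‖ := by
  have hgw : ContinuousOn (fun z => g z * w ‖z‖) (closedBall 0 t) :=
    hg.mul (hw.comp continuous_norm.continuousOn fun z hz => ⟨norm_nonneg z, by simpa using hz⟩)
  have hradial : ∀ r ∈ Ioo 0 t,
      circleAverage (fun z => g z * w ‖z‖) 0 r = w r * circleAverage g 0 r := by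
    intro r hr
    rw [← smul_eq_mul, ← circleAverage_fun_smul]
    refine circleAverage_congr_sphere fun z hz => ?_
    rw [mem_sphere_zero_iff_norm, abs_of_pos hr.1] at hz
    simp [hz, mul_comm]
  have hint_weight : IntegrableOn (fun r => 2 * π * a * (r * w r)) (Ioo 0 t) :=
    ((continuousOn_id.mul hw).integrableOn_Icc.mono_set Ioo_subset_Icc_self).const_mul _
  have hint_average : IntegrableOn
      (fun r => 2 * π * r • circleAverage (fun z => g z * w ‖z‖) 0 r) (Ioo 0 t) := by
    have hcont : ContinuousOn (fun r => r • circleAverage (fun z => g z * w ‖z‖) 0 r)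
        (Icc 0 t) :=
      continuousOn_id.smul (ContinuousOn.circleAverage (hgw.mono fun z hz => by simpa using hz.2)
        fun r hr => hr.1)
    exact (hcont.integrableOn_Icc.mono_set Ioo_subset_Icc_self).const_mul _
  rw [integral_ball_eq_integral_circleAverage hgw, ← integral_const_mul, smul_eq_mul,
    ← integral_const_mul]
  refine setIntegral_mono_on hint_weight hint_average measurableSet_Ioo fun r hr => ?_
  calc 2 * π * a * (r * w r) = 2 * π * (r * w r * a) := by ring
    _ ≤ 2 * π * (r * w r * circleAverage g 0 r) := by
      gcongr
      exacts [mul_nonneg hr.1.le (hw0 r hr), hga r hr]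
    _ = 2 * π * r • circleAverage (fun z => g z * w ‖z‖) 0 r := by
      rw [hradial r hr, smul_eq_mul]; ring

theorem integral_mul_one_sub_sq_rpow {p t : ℝ} (hp : p ≠ -1) (ht : |t| < 1) :
    ∫ r in (0 : ℝ)..t, r * (1 - r ^ 2) ^ p = (1 - (1 - t ^ 2) ^ (p + 1)) / (2 * (p + 1)) := by
  have hp' : p + 1 ≠ 0 := by contrapose! hp; linarith
  have hbase : ∀ r ∈ uIcc 0 t, 0 < 1 - r ^ 2 := fun r hr => by
    have : |r| < 1 := by simpa using (abs_sub_left_of_mem_uIcc hr).trans_lt (by simpa using ht)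
    nlinarith [sq_lt_one_iff_abs_lt_one r |>.2 this]
  have hderiv : ∀ r ∈ uIcc 0 t, HasDerivAt (fun r => -(1 - r ^ 2) ^ (p + 1) / (2 * (p + 1)))
      (r * (1 - r ^ 2) ^ p) r := fun r hr => by
    have h := ((((hasDerivAt_pow 2 r).const_sub 1).rpow_const (p := p + 1)
      (Or.inl (hbase r hr).ne')).neg).div_const (2 * (p + 1))
    refine h.congr_deriv ?_
    rw [add_sub_cancel_right]
    field_simp
    ring
  have hcont : ContinuousOn (fun r : ℝ => r * (1 - r ^ 2) ^ p) (uIcc 0 t) :=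
    continuousOn_id.mul (ContinuousOn.rpow_const (by fun_prop) fun r hr => Or.inl (hbase r hr).ne')
  rw [intervalIntegral.integral_eq_sub_of_hasDerivAt hderiv hcont.intervalIntegrable]
  rw [zero_pow two_ne_zero, sub_zero, one_rpow]
  ring

/-- Explicit Poincaré-disk form of the pointwise bound of a holomorphic function
by its weighted `L^q` integral on a disk of radius `t < 1`. -/
theorem pointwise_bound_holomorphic_disk
    (q t : ℝ) (hq : 1 ≤ q) (ht0 : 0 < t) (ht1 : t < 1)
    (f : ℂ → ℂ) (hf : DifferentiableOn ℂ f (Metric.ball (0 : ℂ) 1)) :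
    (Real.pi / (2 * q - 1)) * (1 - (1 - t ^ 2) ^ (2 * q - 1)) * ‖f 0‖ ^ q
      ≤ ∫ z in Metric.ball (0 : ℂ) t,
          ‖f z‖ ^ q * (1 - ‖z‖ ^ 2) ^ (2 * q - 2) ∂volume := by
  have hbase : ∀ r ∈ Icc 0 t, 0 < 1 - r ^ 2 := fun r hr => by nlinarith [hr.1, hr.2]
  have hg : ContinuousOn (fun z => ‖f z‖ ^ q) (closedBall 0 t) :=
    (hf.continuousOn.mono (closedBall_subset_ball ht1)).norm.rpow_const
      fun _ _ => Or.inr (by linarith)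
  have hw : ContinuousOn (fun r : ℝ => (1 - r ^ 2) ^ (2 * q - 2)) (Icc 0 t) :=
    ContinuousOn.rpow_const (by fun_prop) fun r hr => Or.inl (hbase r hr).ne'
  have hsubmean : ∀ r ∈ Ioo 0 t, ‖f 0‖ ^ q ≤ circleAverage (fun z => ‖f z‖ ^ q) 0 r :=
    fun r hr => (hf.diffContOnCl_ball (by
      rw [abs_of_pos hr.1]
      exact closedBall_subset_ball (hr.2.trans ht1))).norm_rpow_le_circleAverage hq
  have hweight : ∫ r in Ioo 0 t, r * (1 - r ^ 2) ^ (2 * q - 2)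
      = (1 - (1 - t ^ 2) ^ (2 * q - 1)) / (2 * (2 * q - 1)) := by
    rw [← integral_Ioc_eq_integral_Ioo, ← intervalIntegral.integral_of_le ht0.le,
      integral_mul_one_sub_sq_rpow (by linarith) (abs_lt.2 ⟨by linarith, ht1⟩)]
    ring_nf
  have key := mul_integral_le_integral_ball_mul_radial hg hw
    (fun r hr => rpow_nonneg (hbase r (Ioo_subset_Icc_self hr)).le _) hsubmean
  rw [hweight] at key
  convert key using 1
  field_simp
end

section
/- Let K := (1/2)·√(24π)·√((3/π) · (cosh((ln 3)/4))⁶ / ((cosh((ln 3)/4))⁶ − 1) · ((ln 3)/2) · arccos(−sinh((ln 3)/2))). Then 7.345 < K/√2 < 7.346. -/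
/-!
Since `sinh (log 3 / 2) = 1/√3` and `cosh (log 3 / 4)^2 = 1/2 + 1/√3`, the constant is
`√(9/2 · R · log 3 · θ)` with `R = c/(c - 1)`, `c = (1/2 + 1/√3)^3`, and `θ = arccos (-1/√3)`.
Writing `θ = 2π/3 + b`, the equation `cos θ = -1/√3` becomes `√3 cos b + 3 sin b = 2`, and
Taylor bounds at `b ≈ 0.0918` locate `b` to within `10⁻⁴`. With the known bounds on `π`, `√3` and
`log 3`, this pins the constant between `7.345` and `7.346`.
-/

open Real

lemma sqrt_three_mem : √3 ∈ Set.Ioo 1.7320508 1.7320509 :=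
  ⟨(lt_sqrt (by norm_num)).2 (by norm_num), (sqrt_lt' (by norm_num)).2 (by norm_num)⟩

lemma sinh_log_three_div_two : sinh (log 3 / 2) = (√3)⁻¹ := by
  have h3 : √3 * √3 = 3 := mul_self_sqrt (by norm_num)
  rw [← log_sqrt (by norm_num), sinh_log (by positivity)]
  field_simp
  linarith

lemma cosh_log_three_div_four_sq : cosh (log 3 / 4) ^ 2 = 1 / 2 + (√3)⁻¹ := by
  have h3 : √3 * √3 = 3 := mul_self_sqrt (by norm_num)
  have hcosh : cosh (log 3 / 2) = 2 * (√3)⁻¹ := by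
    rw [← log_sqrt (by norm_num), cosh_log (by positivity)]
    field_simp
    linarith
  have hdouble := cosh_two_mul (log 3 / 4)
  rw [show 2 * (log 3 / 4) = log 3 / 2 by ring, hcosh, ← sub_eq_of_eq_add (cosh_sq _)] at hdouble
  linarith

lemma lt_arccos_of_lt_cos {x y : ℝ} (hy₀ : 0 ≤ y) (hyπ : y ≤ π) (hx : -1 ≤ x) (h : x < cos y) :
    y < arccos x := by
  simpa [arccos_cos hy₀ hyπ] using arccos_lt_arccos hx h (cos_le_one y)

lemma arccos_lt_of_cos_lt {x y : ℝ} (hy₀ : 0 ≤ y) (hyπ : y ≤ π) (hx : x ≤ 1) (h : cos y < x) :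
    arccos x < y := by
  simpa [arccos_cos hy₀ hyπ] using arccos_lt_arccos (neg_one_le_cos y) h hx

lemma cos_two_pi_div_three_add (x : ℝ) : cos (2 * π / 3 + x) = -(cos x + √3 * sin x) / 2 := by
  rw [show 2 * π / 3 = π - π / 3 by ring, cos_add, cos_pi_sub, sin_pi_sub, cos_pi_div_three,
    sin_pi_div_three]
  ring

lemma arccos_neg_inv_sqrt_three_mem :
    arccos (-(√3)⁻¹) ∈ Set.Ioo (2 * π / 3 + 0.0917) (2 * π / 3 + 0.0919) := by
  obtain ⟨hs₁, hs₂⟩ := sqrt_three_mem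
  have hs : √3 * (√3)⁻¹ = 1 := mul_inv_cancel₀ (by positivity)
  have hπ := pi_gt_three
  have hinv : (√3)⁻¹ ≤ 1 := inv_le_one_of_one_le₀ (by linarith)
  have hinv₀ : 0 ≤ (√3)⁻¹ := by positivity
  constructor
  · refine lt_arccos_of_lt_cos (by positivity) (by linarith) (by linarith) ?_
    have hcos := (abs_le.1 (cos_bound (x := 0.0917) (by norm_num [abs_of_pos]))).2
    have hsin := sin_le (x := 0.0917) (by norm_num)
    rw [cos_two_pi_div_three_add]
    nlinarith
  · refine arccos_lt_of_cos_lt (by positivity) (by linarith) (by linarith) ?_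
    have hcos := one_sub_sq_div_two_le_cos (x := 0.0919)
    have hsin := sin_ge_sub_cube (x := 0.0919) (by norm_num)
    rw [cos_two_pi_div_three_add]
    nlinarith

lemma inv_sqrt_three_mem : (√3)⁻¹ ∈ Set.Ioo 0.5773502 0.5773503 := by
  obtain ⟨hs₁, hs₂⟩ := sqrt_three_mem
  have hs : √3 * (√3)⁻¹ = 1 := mul_inv_cancel₀ (by positivity)
  constructor <;> nlinarith

lemma cube_div_cube_sub_one_mem :
    (1 / 2 + (√3)⁻¹) ^ 3 / ((1 / 2 + (√3)⁻¹) ^ 3 - 1) ∈ Set.Ioo 4.9926 4.99262 := by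
  obtain ⟨ht₁, ht₂⟩ := inv_sqrt_three_mem
  have hx₁ : (1 / 2 + 0.5773502 : ℝ) ^ 3 < (1 / 2 + (√3)⁻¹) ^ 3 := by gcongr
  have hx₂ : (1 / 2 + (√3)⁻¹) ^ 3 < (1 / 2 + 0.5773503 : ℝ) ^ 3 := by gcongr
  norm_num at hx₁ hx₂
  have hpos : 0 < (1 / 2 + (√3)⁻¹) ^ 3 - 1 := by linarith
  constructor
  · rw [lt_div_iff₀ hpos]; linarith
  · rw [div_lt_iff₀ hpos]; linarith

lemma main_constant_eq_sqrt (c θ : ℝ) :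
    (1 / 2) * √(24 * π) * √((3 / π) * c / (c - 1) * (log 3 / 2) * θ) / √2 =
      √(9 / 2 * (c / (c - 1)) * log 3 * θ) := by
  rw [mul_assoc, ← sqrt_mul (by positivity), mul_div_assoc, ← sqrt_div' _ (by norm_num),
    show (1 / 2 : ℝ) = √(1 / 4) by rw [show (1 / 4 : ℝ) = (1 / 2) ^ 2 by norm_num,
      sqrt_sq (by norm_num)], ← sqrt_mul (by norm_num)]
  congr 1
  field_simp
  ring

/-- Numerical evaluation of the constant `C = K(2)/√2 ≈ 7.3459` from Theorem A. -/
theorem main_constant_bounds :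
    7.345 < ((1 / 2) * Real.sqrt (24 * Real.pi) *
        Real.sqrt ((3 / Real.pi) * (Real.cosh (Real.log 3 / 4)) ^ 6 /
            ((Real.cosh (Real.log 3 / 4)) ^ 6 - 1) *
          (Real.log 3 / 2) * Real.arccos (-(Real.sinh (Real.log 3 / 2))))) / Real.sqrt 2 ∧
      ((1 / 2) * Real.sqrt (24 * Real.pi) *
        Real.sqrt ((3 / Real.pi) * (Real.cosh (Real.log 3 / 4)) ^ 6 /
            ((Real.cosh (Real.log 3 / 4)) ^ 6 - 1) *
          (Real.log 3 / 2) * Real.arccos (-(Real.sinh (Real.log 3 / 2))))) / Real.sqrt 2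
        < 7.346 := by
  have hc : cosh (log 3 / 4) ^ 6 = (1 / 2 + (√3)⁻¹) ^ 3 := by
    rw [← cosh_log_three_div_four_sq]; ring
  rw [sinh_log_three_div_two, hc, main_constant_eq_sqrt]
  obtain ⟨hR₁, hR₂⟩ := cube_div_cube_sub_one_mem
  obtain ⟨hθ₁, hθ₂⟩ := arccos_neg_inv_sqrt_three_mem
  set R := (1 / 2 + (√3)⁻¹) ^ 3 / ((1 / 2 + (√3)⁻¹) ^ 3 - 1)
  set θ := arccos (-(√3)⁻¹)
  have hπ₁ := pi_gt_d6
  have hπ₂ := pi_lt_d6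
  have hL₁ := log_three_gt_d9
  have hL₂ := log_three_lt_d9
  constructor
  · rw [lt_sqrt (by norm_num)]
    calc (7.345 : ℝ) ^ 2 < 9 / 2 * 4.9926 * 1.0986122885 * 2.186 := by norm_num
      _ < 9 / 2 * R * log 3 * θ := by gcongr; linarith
  · rw [sqrt_lt' (by norm_num)]
    calc 9 / 2 * R * log 3 * θ < 9 / 2 * 4.99262 * 1.0986122888 * 2.1863 := by
          gcongr <;> linarith
      _ < 7.346 ^ 2 := by norm_num
end
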